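/- arXiv:2009.14400 — 3 statements merged into one kernel-verified Lean document; each statement's English description precedes it below -/
import Mathlib

section
/- Let ℚ ⊆ L ⊆ L′ be number fields with both L and L′ Galois over ℚ. Let E be a field of characteristic 0 and let M be a finite-dimensional E-linear representation of Gal(L/ℚ) with M^{Gal(L/ℚ)} = 0, regarded also as a representation of Gal(L′/ℚ) via the restriction homomorphism Gal(L′/ℚ) → Gal(L/ℚ). Then the natural inclusion 𝓞_L^× ⊆ 𝓞_{L′}^× induces an injection Hom_{E[Gal(L/ℚ)]}(M, 𝓞_L^× ⊗_ℤ E) → Hom_{E[Gal(L′/ℚ)]}(M, 𝓞_{L′}^× ⊗_ℤ E), and these two E-vector spaces have the same finite dimension. In particular, the Stark unit space U_L[ρ] ⊗ E is independent of the choice of splitting field L of the Artin representation ρ. -/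
/-!
The inclusion `𝓞_L^× → 𝓞_{L'}^×` is injective, `Gal(L'/ℚ)`-equivariant, and its image is exactly
the group of units fixed by `Gal(L'/L)`, because `L'/L` is Galois. As `E` is flat over `ℤ`, both
facts survive tensoring with `E`: the fixed points of a finite group are the kernel of a map to a
finite product. An equivariant map `M → 𝓞_{L'}^× ⊗ E` takes values fixed by `Gal(L'/L)`, which
acts trivially on `M`, so it factors uniquely through `𝓞_L^× ⊗ E`, and composing with the inclusion
is an isomorphism between the two spaces of equivariant maps.
-/

open NumberField TensorProduct

/-- The natural action of an automorphism `σ ∈ Gal(L/ℚ)` of a number field `L` on the unit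
group of its ring of integers, written additively and `ℤ`-linearly. -/
noncomputable def galUnitsLinear (L : Type*) [Field L] [NumberField L] (σ : L ≃ₐ[ℚ] L) :
    Additive (𝓞 L)ˣ →ₗ[ℤ] Additive (𝓞 L)ˣ :=
  (MonoidHom.toAdditive
    (Units.map ((galRestrict ℤ ℚ L (𝓞 L) σ : (𝓞 L) ≃ₐ[ℤ] (𝓞 L)) : (𝓞 L) →* (𝓞 L)))).toIntLinearMap

/-- The induced (`E`-linear) Galois action on `𝓞_L^× ⊗_ℤ E`. -/
noncomputable def galUnitsTensor (L : Type*) [Field L] [NumberField L]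
    (E : Type*) [Field E] (σ : L ≃ₐ[ℚ] L) :
    (E ⊗[ℤ] Additive (𝓞 L)ˣ) →ₗ[E] (E ⊗[ℤ] Additive (𝓞 L)ˣ) :=
  LinearMap.baseChange E (galUnitsLinear L σ)

/-- The submodule of `G`-equivariant `E`-linear maps between two spaces equipped with
(`E`-linear) `G`-actions `ρ` and `ν`. -/
def equivariantHoms {E G M N : Type*} [CommSemiring E]
    [AddCommMonoid M] [Module E M] [AddCommMonoid N] [Module E N]
    (ρ : G → M →ₗ[E] M) (ν : G → N →ₗ[E] N) : Submodule E (M →ₗ[E] N) where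
  carrier := {φ | ∀ g : G, ∀ m : M, φ (ρ g m) = ν g (φ m)}
  add_mem' := by intro a b ha hb g m; simp [ha g m, hb g m]
  zero_mem' := by intro g m; simp
  smul_mem' := by intro c φ hφ g m; simp [hφ g m]

/-- The map `𝓞_L^× ⊗_ℤ E → 𝓞_{L'}^× ⊗_ℤ E` induced by the natural inclusion
`𝓞_L^× ⊆ 𝓞_{L'}^×` for an extension `L'/L` of number fields. -/
noncomputable def unitsInclTensor (L L' : Type*) [Field L] [NumberField L] [Field L']
    [NumberField L'] [Algebra L L'] (E : Type*) [Field E] :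
    (E ⊗[ℤ] Additive (𝓞 L)ˣ) →ₗ[E] (E ⊗[ℤ] Additive (𝓞 L')ˣ) :=
  LinearMap.baseChange E
    ((MonoidHom.toAdditive
      (Units.map (algebraMap (𝓞 L) (𝓞 L') : (𝓞 L) →* (𝓞 L')))).toIntLinearMap)

section EquivariantHoms

variable {E G G' M N N' : Type*} [CommSemiring E] [Monoid G] [Monoid G']
  [AddCommMonoid M] [Module E M] [AddCommMonoid N] [Module E N] [AddCommMonoid N'] [Module E N']
  (ρ : Representation E G M) {ν : G → N →ₗ[E] N} {ν' : G' → N' →ₗ[E] N'} (f : G' →* G)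
  {j : N →ₗ[E] N'}

theorem comp_mem_equivariantHoms (hj : ∀ g', j ∘ₗ ν (f g') = ν' g' ∘ₗ j)
    {φ : M →ₗ[E] N} (hφ : φ ∈ equivariantHoms (fun g => ρ g) ν) :
    j ∘ₗ φ ∈ equivariantHoms (fun g' => ρ (f g')) ν' := fun g' m => by
  simp only [LinearMap.comp_apply, hφ (f g') m]
  exact LinearMap.congr_fun (hj g') (φ m)

def equivariantHomsCompLeft (hj : ∀ g', j ∘ₗ ν (f g') = ν' g' ∘ₗ j) :
    equivariantHoms (fun g => ρ g) ν →ₗ[E] equivariantHoms (fun g' => ρ (f g')) ν' :=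
  (LinearMap.compRight E j).restrict fun _ hφ => comp_mem_equivariantHoms ρ f hj hφ

theorem LinearMap.exists_comp_eq_of_injective (hj : Function.Injective j) {ψ : M →ₗ[E] N'}
    (hψ : ∀ m, ψ m ∈ LinearMap.range j) : ∃ φ : M →ₗ[E] N, j ∘ₗ φ = ψ :=
  ⟨(LinearEquiv.ofInjective j hj).symm ∘ₗ ψ.codRestrict _ hψ, LinearMap.ext fun m => by simp⟩

theorem equivariantHomsCompLeft_bijective (hj : ∀ g', j ∘ₗ ν (f g') = ν' g' ∘ₗ j)
    (hf : Function.Surjective f) (hj_inj : Function.Injective j)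
    (hdescent : ∀ n', (∀ g', f g' = 1 → ν' g' n' = n') → n' ∈ LinearMap.range j) :
    Function.Bijective (equivariantHomsCompLeft ρ f hj) := by
  refine ⟨fun φ ψ h => Subtype.ext <| LinearMap.ext fun m => hj_inj ?_, fun ψ => ?_⟩
  · exact LinearMap.congr_fun (congrArg Subtype.val h) m
  obtain ⟨ψ, hψ⟩ := ψ
  have hψ_fixed (m : M) (g' : G') (hg' : f g' = 1) : ν' g' (ψ m) = ψ m := by
    simpa [hg'] using (hψ g' m).symm
  obtain ⟨φ, rfl⟩ := LinearMap.exists_comp_eq_of_injective hj_inj fun m => hdescent _ (hψ_fixed m)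
  refine ⟨⟨φ, fun g m => hj_inj ?_⟩, rfl⟩
  obtain ⟨g', rfl⟩ := hf g
  calc j (φ (ρ (f g') m))
      = ν' g' (j (φ m)) := hψ g' m
    _ = j (ν (f g') (φ m)) := (LinearMap.congr_fun (hj g') (φ m)).symm

end EquivariantHoms

section FlatInvariants

open LinearMap

variable {R A B : Type*} [CommRing R] [AddCommGroup A] [Module R A] [AddCommGroup B] [Module R B]
  (E : Type*) [AddCommGroup E] [Module R E] {ι : Type*}

theorem TensorProduct.piRight_lTensor_pi_apply [Fintype ι] [DecidableEq ι] {C : ι → Type*}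
    [∀ i, AddCommGroup (C i)] [∀ i, Module R (C i)] (T : ∀ i, B →ₗ[R] C i) (x : E ⊗[R] B) (i : ι) :
    piRight R R E C ((LinearMap.pi T).lTensor E x) i = (T i).lTensor E x := by
  induction x using TensorProduct.induction_on with
  | zero => simp
  | tmul e b => simp
  | add x y hx hy => simp_all

theorem Module.Flat.mem_range_lTensor_of_forall_lTensor_apply_eq [Module.Flat R E] [Finite ι]
    {j : A →ₗ[R] B} {T : ι → B →ₗ[R] B} (hj : ∀ b, b ∈ range j ↔ ∀ i, T i b = b)
    {x : E ⊗[R] B} (hx : ∀ i, (T i).lTensor E x = x) : x ∈ range (j.lTensor E) := by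
  classical
  have := Fintype.ofFinite ι
  let D : B →ₗ[R] ι → B := LinearMap.pi fun i => T i - LinearMap.id
  have hexact : Function.Exact j D := fun b => by
    rw [← LinearMap.coe_range, SetLike.mem_coe, hj]
    simp [D, funext_iff, sub_eq_zero]
  have hDx : D.lTensor E x = 0 := (TensorProduct.piRight R R E fun _ => B).injective <| by
    ext1 i
    simp [D, TensorProduct.piRight_lTensor_pi_apply, lTensor_sub, hx]
  exact (Module.Flat.lTensor_exact E hexact x).mp hDx

end FlatInvariants

theorem AlgEquiv.restrictNormalHom_restrictScalars {F K L : Type*} [Field F] [Field K] [Field L]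
    [Algebra F K] [Algebra F L] [Algebra K L] [IsScalarTower F K L] [Normal F K]
    (τ : L ≃ₐ[K] L) : AlgEquiv.restrictNormalHom K (τ.restrictScalars F) = 1 := by
  ext y
  apply (algebraMap K L).injective
  exact (AlgEquiv.restrictNormal_commutes (τ.restrictScalars F) K y).trans (τ.commutes y)

section UnitDescent

variable (L L' : Type*) [Field L] [Field L'] [Algebra L L']

noncomputable def unitsInclLinear : Additive (𝓞 L)ˣ →ₗ[ℤ] Additive (𝓞 L')ˣ :=
  (MonoidHom.toAdditive
    (Units.map (algebraMap (𝓞 L) (𝓞 L') : (𝓞 L) →* (𝓞 L')))).toIntLinearMap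

theorem unitsInclLinear_injective : Function.Injective (unitsInclLinear L L') :=
  Additive.toMul.injective.comp <| (Units.map_injective
    (RingOfIntegers.algebraMap.injective L L')).comp Additive.toMul.injective

variable [NumberField L] [NumberField L']

theorem unitsInclTensor_eq_baseChange (E : Type*) [Field E] :
    unitsInclTensor L L' E = (unitsInclLinear L L').baseChange E := rfl

theorem unitsInclTensor_injective (E : Type*) [Field E] [CharZero E] :
    Function.Injective (unitsInclTensor L L' E) := by
  rw [unitsInclTensor_eq_baseChange, LinearMap.baseChange_eq_ltensor]
  exact Module.Flat.lTensor_preserves_injective_linearMap _ (unitsInclLinear_injective L L')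

theorem galUnitsLinear_one : galUnitsLinear L 1 = LinearMap.id := by
  ext u
  simp [galUnitsLinear]

variable [IsScalarTower ℚ L L'] [Normal ℚ L]

theorem algebraMap_galRestrict_restrictNormalHom (σ' : L' ≃ₐ[ℚ] L') (x : 𝓞 L) :
    algebraMap (𝓞 L) (𝓞 L') (galRestrict ℤ ℚ L (𝓞 L) (AlgEquiv.restrictNormalHom L σ') x) =
      galRestrict ℤ ℚ L' (𝓞 L') σ' (algebraMap (𝓞 L) (𝓞 L') x) := by
  apply RingOfIntegers.ext
  calc algebraMap L L' (algebraMap (𝓞 L) L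
        (galRestrict ℤ ℚ L (𝓞 L) (AlgEquiv.restrictNormalHom L σ') x))
      = algebraMap L L' (AlgEquiv.restrictNormalHom L σ' (algebraMap (𝓞 L) L x)) := by
        rw [algebraMap_galRestrict_apply]
    _ = σ' (algebraMap (𝓞 L') L' (algebraMap (𝓞 L) (𝓞 L') x)) :=
        AlgEquiv.restrictNormal_commutes σ' L _
    _ = algebraMap (𝓞 L') L' (galRestrict ℤ ℚ L' (𝓞 L') σ' (algebraMap (𝓞 L) (𝓞 L') x)) :=
        (algebraMap_galRestrict_apply ℤ σ' _).symm

theorem unitsInclLinear_comp_galUnitsLinear (σ' : L' ≃ₐ[ℚ] L') :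
    unitsInclLinear L L' ∘ₗ galUnitsLinear L (AlgEquiv.restrictNormalHom L σ') =
      galUnitsLinear L' σ' ∘ₗ unitsInclLinear L L' := by
  refine LinearMap.ext fun u => Additive.toMul.injective <| Units.ext ?_
  exact algebraMap_galRestrict_restrictNormalHom L L' σ' _

theorem unitsInclTensor_comp_galUnitsTensor (E : Type*) [Field E] (σ' : L' ≃ₐ[ℚ] L') :
    unitsInclTensor L L' E ∘ₗ galUnitsTensor L E (AlgEquiv.restrictNormalHom L σ') =
      galUnitsTensor L' E σ' ∘ₗ unitsInclTensor L L' E := by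
  rw [unitsInclTensor_eq_baseChange, galUnitsTensor, galUnitsTensor,
    ← LinearMap.baseChange_comp, ← LinearMap.baseChange_comp,
    unitsInclLinear_comp_galUnitsLinear]

variable [IsGalois L L']

theorem mem_range_algebraMap_of_forall_restrictNormalHom_eq_one {x : 𝓞 L'}
    (hx : ∀ σ' : L' ≃ₐ[ℚ] L', AlgEquiv.restrictNormalHom L σ' = 1 →
      galRestrict ℤ ℚ L' (𝓞 L') σ' x = x) :
    x ∈ (algebraMap (𝓞 L) (𝓞 L')).range := by
  have : FiniteDimensional L L' := FiniteDimensional.right ℚ L L'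
  obtain ⟨y, hy⟩ := (IsGalois.mem_bot_iff_fixed (F := L) (x : L')).mpr fun τ => by
    have := algebraMap_galRestrict_apply ℤ (τ.restrictScalars ℚ) x
    rw [hx _ (AlgEquiv.restrictNormalHom_restrictScalars (F := ℚ) τ)] at this
    exact this.symm
  have hy_int : IsIntegral ℤ y :=
    (isIntegral_algebraMap_iff (algebraMap L L').injective).mp (hy ▸ x.isIntegral_coe)
  exact ⟨⟨y, hy_int⟩, RingOfIntegers.ext hy⟩

theorem mem_range_unitsInclLinear_iff (u : Additive (𝓞 L')ˣ) :
    u ∈ LinearMap.range (unitsInclLinear L L') ↔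
      ∀ σ' : L' ≃ₐ[ℚ] L', AlgEquiv.restrictNormalHom L σ' = 1 → galUnitsLinear L' σ' u = u := by
  constructor
  · rintro ⟨v, rfl⟩ σ' hσ'
    rw [← LinearMap.comp_apply, ← unitsInclLinear_comp_galUnitsLinear, hσ', galUnitsLinear_one,
      LinearMap.comp_id]
  · intro hu
    obtain ⟨y, hy⟩ := mem_range_algebraMap_of_forall_restrictNormalHom_eq_one L L'
      fun σ' hσ' => congrArg Units.val (congrArg Additive.toMul (hu σ' hσ'))
    have hy_unit : IsUnit y :=
      IsUnit.of_map (algebraMap (𝓞 L) (𝓞 L')) y (hy ▸ (Additive.toMul u).isUnit)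
    exact ⟨Additive.ofMul hy_unit.unit, Units.ext hy⟩

theorem mem_range_unitsInclTensor_of_forall_restrictNormalHom_eq_one (E : Type*) [Field E]
    [CharZero E] {x : E ⊗[ℤ] Additive (𝓞 L')ˣ}
    (hx : ∀ σ' : L' ≃ₐ[ℚ] L', AlgEquiv.restrictNormalHom L σ' = 1 → galUnitsTensor L' E σ' x = x) :
    x ∈ LinearMap.range (unitsInclTensor L L' E) := by
  rw [unitsInclTensor_eq_baseChange]
  obtain ⟨y, hy⟩ := Module.Flat.mem_range_lTensor_of_forall_lTensor_apply_eq E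
    (T := fun σ' : {σ' : L' ≃ₐ[ℚ] L' // AlgEquiv.restrictNormalHom L σ' = 1} =>
      galUnitsLinear L' σ')
    (fun u => by rw [mem_range_unitsInclLinear_iff L L', Subtype.forall])
    (x := x) fun σ' => by rw [← LinearMap.baseChange_eq_ltensor]; exact hx σ' σ'.2
  exact ⟨y, by rwa [LinearMap.baseChange_eq_ltensor]⟩

end UnitDescent

theorem stark_units_independent_of_splitting_field_general
    (L L' : Type*) [Field L] [NumberField L] [Field L'] [NumberField L']
    [Algebra L L'] [IsScalarTower ℚ L L'] [IsGalois ℚ L] [IsGalois ℚ L']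
    (E : Type*) [Field E] [CharZero E]
    (M : Type*) [AddCommGroup M] [Module E M]
    (ρ : Representation E (L ≃ₐ[ℚ] L) M) :
    (∀ φ : M →ₗ[E] (E ⊗[ℤ] Additive (𝓞 L)ˣ),
        φ ∈ equivariantHoms (fun σ : L ≃ₐ[ℚ] L => ρ σ)
            (fun σ : L ≃ₐ[ℚ] L => galUnitsTensor L E σ) →
        (unitsInclTensor L L' E) ∘ₗ φ ∈
          equivariantHoms
            (fun σ' : L' ≃ₐ[ℚ] L' => ρ (AlgEquiv.restrictNormalHom L σ'))
            (fun σ' : L' ≃ₐ[ℚ] L' => galUnitsTensor L' E σ')) ∧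
    (∀ φ ψ : M →ₗ[E] (E ⊗[ℤ] Additive (𝓞 L)ˣ),
        φ ∈ equivariantHoms (fun σ : L ≃ₐ[ℚ] L => ρ σ)
            (fun σ : L ≃ₐ[ℚ] L => galUnitsTensor L E σ) →
        ψ ∈ equivariantHoms (fun σ : L ≃ₐ[ℚ] L => ρ σ)
            (fun σ : L ≃ₐ[ℚ] L => galUnitsTensor L E σ) →
        (unitsInclTensor L L' E) ∘ₗ φ = (unitsInclTensor L L' E) ∘ₗ ψ → φ = ψ) ∧
    Module.finrank E
        (equivariantHoms (fun σ : L ≃ₐ[ℚ] L => ρ σ)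
          (fun σ : L ≃ₐ[ℚ] L => galUnitsTensor L E σ)) =
      Module.finrank E
        (equivariantHoms
          (fun σ' : L' ≃ₐ[ℚ] L' => ρ (AlgEquiv.restrictNormalHom L σ'))
          (fun σ' : L' ≃ₐ[ℚ] L' => galUnitsTensor L' E σ')) := by
  have : IsGalois L L' := IsGalois.tower_top_of_isGalois ℚ L L'
  have hcomm := unitsInclTensor_comp_galUnitsTensor L L' E
  have hinj := unitsInclTensor_injective L L' E
  refine ⟨fun φ hφ => comp_mem_equivariantHoms ρ _ hcomm hφ,
    fun φ ψ _ _ h => LinearMap.ext fun m => hinj (LinearMap.congr_fun h m), ?_⟩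
  exact (LinearEquiv.ofBijective _ <| equivariantHomsCompLeft_bijective ρ _ hcomm
    (AlgEquiv.restrictNormalHom_surjective L') hinj
    (fun _ => mem_range_unitsInclTensor_of_forall_restrictNormalHom_eq_one L L' E)).finrank_eq

/-- Let `ℚ ⊆ L ⊆ L'` be number fields with both `L` and `L'` Galois over
`ℚ`.  Let `E` be a field of characteristic zero and `M` a finite-dimensional `E`-linear
representation of `Gal(L/ℚ)` with `M^{Gal(L/ℚ)} = 0`, regarded also as a representation of
`Gal(L'/ℚ)` via the restriction homomorphism `Gal(L'/ℚ) → Gal(L/ℚ)`.  Then the natural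
inclusion `𝓞_L^× ⊆ 𝓞_{L'}^×` induces an injection
`Hom_{E[Gal(L/ℚ)]}(M, 𝓞_L^× ⊗ E) → Hom_{E[Gal(L'/ℚ)]}(M, 𝓞_{L'}^× ⊗ E)`, and these two
`E`-vector spaces have the same (finite) dimension.  In particular the Stark unit space is
independent of the choice of splitting field. -/
theorem stark_units_independent_of_splitting_field
    (L L' : Type*) [Field L] [NumberField L] [Field L'] [NumberField L']
    [Algebra L L'] [IsScalarTower ℚ L L'] [IsGalois ℚ L] [IsGalois ℚ L']
    (E : Type*) [Field E] [CharZero E]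
    (M : Type*) [AddCommGroup M] [Module E M] [FiniteDimensional E M]
    (ρ : Representation E (L ≃ₐ[ℚ] L) M)
    (htriv : ∀ m : M, (∀ σ : L ≃ₐ[ℚ] L, ρ σ m = m) → m = 0) :
    (∀ φ : M →ₗ[E] (E ⊗[ℤ] Additive (𝓞 L)ˣ),
        φ ∈ equivariantHoms (fun σ : L ≃ₐ[ℚ] L => ρ σ)
            (fun σ : L ≃ₐ[ℚ] L => galUnitsTensor L E σ) →
        (unitsInclTensor L L' E) ∘ₗ φ ∈
          equivariantHoms
            (fun σ' : L' ≃ₐ[ℚ] L' => ρ (AlgEquiv.restrictNormalHom L σ'))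
            (fun σ' : L' ≃ₐ[ℚ] L' => galUnitsTensor L' E σ')) ∧
    (∀ φ ψ : M →ₗ[E] (E ⊗[ℤ] Additive (𝓞 L)ˣ),
        φ ∈ equivariantHoms (fun σ : L ≃ₐ[ℚ] L => ρ σ)
            (fun σ : L ≃ₐ[ℚ] L => galUnitsTensor L E σ) →
        ψ ∈ equivariantHoms (fun σ : L ≃ₐ[ℚ] L => ρ σ)
            (fun σ : L ≃ₐ[ℚ] L => galUnitsTensor L E σ) →
        (unitsInclTensor L L' E) ∘ₗ φ = (unitsInclTensor L L' E) ∘ₗ ψ → φ = ψ) ∧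
    Module.finrank E
        (equivariantHoms (fun σ : L ≃ₐ[ℚ] L => ρ σ)
          (fun σ : L ≃ₐ[ℚ] L => galUnitsTensor L E σ)) =
      Module.finrank E
        (equivariantHoms
          (fun σ' : L' ≃ₐ[ℚ] L' => ρ (AlgEquiv.restrictNormalHom L σ'))
          (fun σ' : L' ≃ₐ[ℚ] L' => galUnitsTensor L' E σ')) :=
  stark_units_independent_of_splitting_field_general L L' E M ρ
end

section
/- Let O be a discrete valuation ring with uniformizer π, and let σ be a ring automorphism of O with σ(π) = −π such that every element of O is congruent modulo (π) to a σ-fixed element (i.e., for each x ∈ O there exists y ∈ O with σ(y) = y and x − y ∈ πO). Let A be a commutative group, let ξ : O^× → A be a group homomorphism, and define χ : O^× → A by χ(u) = ξ(u) · ξ(σ(u))⁻¹. For n ≥ 1 let U^n := {u ∈ O^× : u − 1 ∈ πⁿO}, and set U^0 := O^×. Then for every odd integer i ≥ 1: if χ(u) = 1 for all u ∈ U^i, then χ(u) = 1 for all u ∈ U^{i−1}. -/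
/-!
A unit `u ≡ 1 mod πⁱ⁻¹` agrees modulo `πⁱ` with a `σ`-fixed unit `w`: write `u = 1 + πⁱ⁻¹ x`,
pick a `σ`-fixed `y ≡ x mod π`, and take `w = 1 + πⁱ⁻¹ y`, which is `σ`-fixed because
`σ πⁱ⁻¹ = (-π)ⁱ⁻¹ = πⁱ⁻¹` for odd `i`. Then `χ w = 1` and `u w⁻¹ ∈ Uⁱ`, so `χ u = 1`.
-/

theorem IsLocalRing.isUnit_of_dvd_sub {R : Type*} [CommRing R] [IsLocalRing R] {π u w : R}
    (hπ : ¬IsUnit π) (hu : IsUnit u) (h : π ∣ u - w) : IsUnit w := by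
  have hsum : IsUnit (w + (u - w)) := by rwa [add_sub_cancel]
  exact (isUnit_or_isUnit_of_isUnit_add hsum).resolve_right
    fun hunit ↦ hπ (isUnit_of_dvd_unit h hunit)

theorem exists_fixed_sub_mem_span_pow_succ {O : Type*} [CommRing O] {π : O}
    (σ : O →+* O) (hσπ : σ π = -π)
    (hres : ∀ x : O, ∃ y : O, σ y = y ∧ x - y ∈ Ideal.span {π})
    {n : ℕ} (hn : Even n) {u : O} (hu : u - 1 ∈ Ideal.span {π ^ n}) :
    ∃ w : O, σ w = w ∧ u - w ∈ Ideal.span {π ^ (n + 1)} := by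
  obtain ⟨x, hx⟩ := Ideal.mem_span_singleton'.mp hu
  obtain ⟨y, hσy, hxy⟩ := hres x
  obtain ⟨t, ht⟩ := Ideal.mem_span_singleton.mp hxy
  refine ⟨1 + π ^ n * y, ?_, Ideal.mem_span_singleton.mpr ⟨t, ?_⟩⟩
  · rw [map_add, map_one, map_mul, map_pow, hσπ, hσy, hn.neg_pow]
  · linear_combination -hx + π ^ n * ht

theorem Units.val_mul_inv_sub_one_mem {R : Type*} [CommRing R] {I : Ideal R} {u w : Rˣ}
    (h : (u : R) - w ∈ I) : ((u * w⁻¹ : Rˣ) : R) - 1 ∈ I := by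
  have hfactor : ((u * w⁻¹ : Rˣ) : R) - 1 = ((u : R) - w) * ((w⁻¹ : Rˣ) : R) := by
    rw [Units.val_mul]
    linear_combination w.mul_inv
  rw [hfactor]
  exact I.mul_mem_right _ h

theorem MonoidHom.mul_inv_comp_eq_one_of_fixed {G A : Type*} [Group G] [CommGroup A]
    (ξ : G →* A) (τ : G →* G) {u w : G} (hw : τ w = w)
    (h : ξ (u * w⁻¹) * (ξ (τ (u * w⁻¹)))⁻¹ = 1) : ξ u * (ξ (τ u))⁻¹ = 1 := by
  simp only [map_mul, map_inv, hw] at h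
  rw [← h]
  group

theorem character_trivial_step_down_general
    {O : Type*} [CommRing O] [IsDomain O] [IsDiscreteValuationRing O]
    (π : O) (hπ : Irreducible π)
    (σ : O ≃+* O) (hσπ : σ π = -π)
    (hres : ∀ x : O, ∃ y : O, σ y = y ∧ x - y ∈ Ideal.span {π})
    {A : Type*} [CommGroup A] (ξ : Oˣ →* A)
    (i : ℕ) (hodd : Odd i)
    (h : ∀ u : Oˣ, ((u : O) - 1) ∈ Ideal.span {π ^ i} →
      ξ u * (ξ (Units.map σ.toRingHom.toMonoidHom u))⁻¹ = 1) :
    ∀ u : Oˣ, ((u : O) - 1) ∈ Ideal.span {π ^ (i - 1)} →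
      ξ u * (ξ (Units.map σ.toRingHom.toMonoidHom u))⁻¹ = 1 := by
  intro u hu
  obtain ⟨w, hσw, huw⟩ := exists_fixed_sub_mem_span_pow_succ σ.toRingHom hσπ hres
    (Nat.Odd.sub_odd hodd odd_one) hu
  rw [Nat.sub_one_add_one hodd.pos.ne'] at huw
  have hπ_dvd : π ∣ (u : O) - w :=
    (dvd_pow_self π hodd.pos.ne').trans (Ideal.mem_span_singleton.mp huw)
  have hw : IsUnit w := IsLocalRing.isUnit_of_dvd_sub hπ.not_isUnit u.isUnit hπ_dvd
  refine MonoidHom.mul_inv_comp_eq_one_of_fixed ξ _ (w := hw.unit) (Units.ext hσw) (h _ ?_)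
  exact Units.val_mul_inv_sub_one_mem huw

/-- Let `O` be a discrete valuation ring with uniformizer `π`, and let `σ`
be a ring automorphism of `O` with `σ π = −π` such that every element of `O` is congruent
modulo `(π)` to a `σ`-fixed element. Let `A` be a commutative group, `ξ : Oˣ →* A` a
homomorphism, and `χ u = ξ u · ξ(σ u)⁻¹`.  For `n ≥ 1` let `Uⁿ = {u ∈ Oˣ : u − 1 ∈ πⁿO}`
(and `U⁰ = Oˣ`; note `u - 1 ∈ (π^0) = (1)` holds for every unit).  Then for every odd
`i ≥ 1`: if `χ` is trivial on `Uⁱ`, then `χ` is trivial on `U^{i−1}`. -/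
theorem character_trivial_step_down
    {O : Type*} [CommRing O] [IsDomain O] [IsDiscreteValuationRing O]
    (π : O) (hπ : Irreducible π)
    (σ : O ≃+* O) (hσπ : σ π = -π)
    (hres : ∀ x : O, ∃ y : O, σ y = y ∧ x - y ∈ Ideal.span {π})
    {A : Type*} [CommGroup A] (ξ : Oˣ →* A)
    (i : ℕ) (hi : 1 ≤ i) (hodd : Odd i)
    (h : ∀ u : Oˣ, ((u : O) - 1) ∈ Ideal.span {π ^ i} →
      ξ u * (ξ (Units.map σ.toRingHom.toMonoidHom u))⁻¹ = 1) :
    ∀ u : Oˣ, ((u : O) - 1) ∈ Ideal.span {π ^ (i - 1)} →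
      ξ u * (ξ (Units.map σ.toRingHom.toMonoidHom u))⁻¹ = 1 :=
  character_trivial_step_down_general π hπ σ hσπ hres ξ i hodd h
end

section
/- Let O be a discrete valuation ring with uniformizer π, and let σ be a ring automorphism of O with σ(π) = −π such that every element of O is congruent modulo (π) to a σ-fixed element. Let A be a commutative group, ξ : O^× → A a group homomorphism, and χ(u) := ξ(u) · ξ(σ(u))⁻¹. For n ≥ 1 let U^n := {u ∈ O^× : u − 1 ∈ πⁿO} and U^0 := O^×. Suppose there exists some n ≥ 0 such that χ is trivial on U^n. Then the least n ≥ 0 such that χ(u) = 1 for all u ∈ U^n (the conductor exponent a(χ)) is an even integer. -/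
/-!
Suppose the conductor exponent `n` of `χ = ξ / (ξ ∘ σ)` were odd, say `n = m + 1` with `m` even.
Then `σ` fixes `π ^ m`, so for `u = 1 + π ^ m x ∈ Uᵐ`, lifting `x` modulo `π` to a `σ`-fixed `y`
gives a `σ`-fixed unit `w = 1 + π ^ m y` with `u / w ∈ Uⁿ`. As `χ` kills `σ`-fixed units and `Uⁿ`,
it kills `u`, hence all of `Uᵐ`, contradicting the minimality of `n`.
-/

open IsLocalRing

section

variable {O : Type*} [CommRing O]

theorem ringEquiv_pow_eq_self_of_even {σ : O ≃+* O} {π : O} (hσπ : σ π = -π) {m : ℕ}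
    (hm : Even m) : σ (π ^ m) = π ^ m := by
  rw [map_pow, hσπ, hm.neg_pow]

theorem IsLocalRing.isUnit_of_sub_mem_maximalIdeal [IsLocalRing O] {u w : O} (hu : IsUnit u)
    (huw : u - w ∈ maximalIdeal O) : IsUnit w := by
  by_contra hw
  refine notMem_maximalIdeal.mpr hu ?_
  simpa using add_mem huw hw

theorem exists_fixed_unit_mul_inv_sub_one_mem [IsLocalRing O] {π : O}
    (hπ : π ∈ maximalIdeal O) {σ : O ≃+* O}
    (hres : ∀ x : O, ∃ y : O, σ y = y ∧ x - y ∈ Ideal.span {π}) {m : ℕ}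
    (hσ : σ (π ^ m) = π ^ m) {u : Oˣ} (hu : (u : O) - 1 ∈ Ideal.span {π ^ m}) :
    ∃ w : Oˣ, σ w = w ∧ ((u * w⁻¹ : Oˣ) : O) - 1 ∈ Ideal.span {π ^ (m + 1)} := by
  obtain ⟨x, hx⟩ := Ideal.mem_span_singleton'.mp hu
  obtain ⟨y, hy, hxy⟩ := hres x
  obtain ⟨z, hz⟩ := Ideal.mem_span_singleton'.mp hxy
  have huw : (u : O) - (1 + π ^ m * y) = π ^ (m + 1) * z := by
    linear_combination -hx - π ^ m * hz
  have hunit : IsUnit (1 + π ^ m * y) :=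
    isUnit_of_sub_mem_maximalIdeal u.isUnit <| huw ▸
      Ideal.mul_mem_right _ _ (Ideal.pow_mem_of_mem _ hπ _ m.succ_pos)
  obtain ⟨w, hw⟩ := hunit
  refine ⟨w, ?_, Ideal.mem_span_singleton'.mpr ⟨z * (w⁻¹ : Oˣ), ?_⟩⟩
  · rw [hw, map_add, map_one, map_mul, hσ, hy]
  · have hww : (w : O) * (w⁻¹ : Oˣ) = 1 := w.mul_inv
    rw [← hw] at huw
    rw [Units.val_mul]
    linear_combination -((w⁻¹ : Oˣ) : O) * huw - hww

variable {A : Type*} [CommGroup A]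

theorem MonoidHom.forall_eq_one_of_pow_succ [IsLocalRing O] {π : O}
    (hπ : π ∈ maximalIdeal O) {σ : O ≃+* O}
    (hres : ∀ x : O, ∃ y : O, σ y = y ∧ x - y ∈ Ideal.span {π}) (χ : Oˣ →* A)
    (hfix : ∀ w : Oˣ, σ w = w → χ w = 1) {m : ℕ} (hσ : σ (π ^ m) = π ^ m)
    (hχ : ∀ u : Oˣ, (u : O) - 1 ∈ Ideal.span {π ^ (m + 1)} → χ u = 1) :
    ∀ u : Oˣ, (u : O) - 1 ∈ Ideal.span {π ^ m} → χ u = 1 := by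
  intro u hu
  obtain ⟨w, hw, huw⟩ := exists_fixed_unit_mul_inv_sub_one_mem hπ hres hσ hu
  calc χ u = χ (u * w⁻¹) * χ w := by rw [← map_mul, inv_mul_cancel_right]
    _ = 1 := by rw [hfix w hw, hχ _ huw, one_mul]

theorem MonoidHom.div_comp_unitsMap_eq_one_of_fixed (σ : O ≃+* O) (ξ : Oˣ →* A) {w : Oˣ}
    (hw : σ w = w) : (ξ / ξ.comp (Units.map σ.toRingHom.toMonoidHom)) w = 1 := by
  have : Units.map σ.toRingHom.toMonoidHom w = w := Units.ext hw
  rw [MonoidHom.div_apply, MonoidHom.comp_apply, this, div_self']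

end

/-- Let `O` be a discrete valuation ring with uniformizer `π`, and let `σ`
be a ring automorphism of `O` with `σ π = −π` such that every element of `O` is congruent
modulo `(π)` to a `σ`-fixed element. Let `A` be a commutative group, `ξ : Oˣ →* A` a
homomorphism, and `χ u = ξ u · ξ(σ u)⁻¹`.  For `n ≥ 0` let `Uⁿ = {u ∈ Oˣ : u − 1 ∈ πⁿO}`
(so `U⁰ = Oˣ`).  If `χ` is trivial on some `Uⁿ`, then the least `n ≥ 0` such that `χ` is
trivial on `Uⁿ` — the conductor exponent `a(χ)` — is even. -/
theorem conductor_exponent_even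
    {O : Type*} [CommRing O] [IsDomain O] [IsDiscreteValuationRing O]
    (π : O) (hπ : Irreducible π)
    (σ : O ≃+* O) (hσπ : σ π = -π)
    (hres : ∀ x : O, ∃ y : O, σ y = y ∧ x - y ∈ Ideal.span {π})
    {A : Type*} [CommGroup A] (ξ : Oˣ →* A)
    (hcond : ∃ n : ℕ, ∀ u : Oˣ, ((u : O) - 1) ∈ Ideal.span {π ^ n} →
      ξ u * (ξ (Units.map σ.toRingHom.toMonoidHom u))⁻¹ = 1) :
    Even (sInf {n : ℕ | ∀ u : Oˣ, ((u : O) - 1) ∈ Ideal.span {π ^ n} →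
      ξ u * (ξ (Units.map σ.toRingHom.toMonoidHom u))⁻¹ = 1}) := by
  set χ := ξ / ξ.comp (Units.map σ.toRingHom.toMonoidHom)
  set S := {n : ℕ | ∀ u : Oˣ, ((u : O) - 1) ∈ Ideal.span {π ^ n} → χ u = 1}
  have hS : {n : ℕ | ∀ u : Oˣ, ((u : O) - 1) ∈ Ideal.span {π ^ n} →
      ξ u * (ξ (Units.map σ.toRingHom.toMonoidHom u))⁻¹ = 1} = S := by
    simp [S, χ, div_eq_mul_inv]
  have hne : S.Nonempty := hS ▸ hcond
  rw [hS]
  by_contra hodd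
  obtain ⟨m, hm⟩ := Nat.not_even_iff_odd.mp hodd
  have hmin := Nat.sInf_mem hne
  rw [hm] at hmin
  have h2m : 2 * m ∈ S := χ.forall_eq_one_of_pow_succ hπ.not_isUnit hres
    (fun _ => ξ.div_comp_unitsMap_eq_one_of_fixed σ)
    (ringEquiv_pow_eq_self_of_even hσπ (even_two_mul m)) hmin
  have := Nat.sInf_le h2m
  omega
end
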